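/- Let G ∈ ℂ^{m×n} with m < n satisfy G^# Gᵀ = G G* and suppose [G^# G] has full row rank m. Then there exists H ∈ ℂ^{(n−m)×n} such that the stacked matrix W = [G; H] ∈ ℂ^{n×n} satisfies W^# Wᵀ = W W* and [W^# W] has full row rank n. -/

import Mathlib

/-!
Write `W_i` for the rows of `W` and `ω u v = Im (u* v)` for the standard symplectic form on
`ℂⁿ ≅ ℝ²ⁿ`. Entrywise, `W^# Wᵀ = W W*` says that every Hermitian product `W_i* W_j` is real,
i.e. the rows are pairwise `ω`-orthogonal; and a complex relation among the rows of `[W^# W]` is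
a pair of relations `c`, `c̄` among the rows of `W`, i.e. a pair of real relations `Re c`, `Im c`,
so `[W^# W]` has full row rank iff the rows of `W` are `ℝ`-linearly independent. The rows of `G`
thus span an isotropic subspace of `ℝ²ⁿ`; it lies in a maximal isotropic subspace, which equals
its own `ω`-orthogonal and so has dimension `n`, and `H` is the rest of a basis of it.
-/

open Matrix Module Submodule ComplexOrder

lemma LinearIndependent.exists_linearIndependent_sumElim_of_finrank_eq {K V ι : Type*}
    [Field K] [AddCommGroup V] [Module K V] [Fintype ι] {g : ι → V} (hg : LinearIndependent K g)
    {M : Submodule K V} [FiniteDimensional K M] (hgM : ∀ i, g i ∈ M) {r : ℕ}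
    (hM : finrank K M = Fintype.card ι + r) :
    ∃ h : Fin r → V, LinearIndependent K (Sum.elim g h) ∧ ∀ j, h j ∈ M := by
  let g' : ι → M := fun i => ⟨g i, hgM i⟩
  have hg' : LinearIndependent K g' := LinearIndependent.of_comp M.subtype hg
  let b := Basis.sumExtend hg'
  have hb : ∀ i, b (Sum.inl i) = g' i := by
    intro i; simp only [b, Basis.sumExtend, Basis.reindex_apply, Basis.coe_extend]; rfl
  have : Finite (Basis.sumExtendIndex hg') := (Module.Finite.finite_basis b).sum_right ι
  have : Fintype (Basis.sumExtendIndex hg') := Fintype.ofFinite _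
  have hcard : Fintype.card (Basis.sumExtendIndex hg') = r := by
    have := Module.finrank_eq_card_basis b
    rw [Fintype.card_sum] at this
    omega
  let e := Fintype.equivFinOfCardEq hcard
  refine ⟨fun j => b (Sum.inr (e.symm j)), ?_, fun j => (b _).2⟩
  have hcomp : Sum.elim g (fun j => (b (Sum.inr (e.symm j)) : V)) =
      M.subtype ∘ b ∘ Sum.map id e.symm := by
    ext (i | j) <;> simp [hb, g']
  rw [hcomp]
  exact (b.linearIndependent.comp _
    (Sum.map_injective.mpr ⟨Function.injective_id, e.symm.injective⟩)).map' M.subtype M.ker_subtype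

namespace LinearMap.BilinForm

variable {K V : Type*} [Field K] [AddCommGroup V] [Module K V] {B : LinearMap.BilinForm K V}

lemma sup_span_singleton_le_orthogonal (hB : B.IsAlt) {M : Submodule K V}
    (hM : M ≤ B.orthogonal M) {v : V} (hv : v ∈ B.orthogonal M) :
    M ⊔ K ∙ v ≤ B.orthogonal (M ⊔ K ∙ v) := by
  intro x hx y hy
  obtain ⟨a, ha, _, hx', rfl⟩ := Submodule.mem_sup.mp hx
  obtain ⟨b, hb, _, hy', rfl⟩ := Submodule.mem_sup.mp hy
  obtain ⟨s, rfl⟩ := Submodule.mem_span_singleton.mp hx'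
  obtain ⟨t, rfl⟩ := Submodule.mem_span_singleton.mp hy'
  have hba : B b a = 0 := hM ha b hb
  have hbv : B b v = 0 := hv b hb
  have hva : B v a = 0 := hB.isRefl a v (hv a ha)
  simp [hba, hbv, hva, hB v]

lemma exists_le_orthogonal_eq [FiniteDimensional K V] (hB : B.IsAlt) {L : Submodule K V}
    (hL : L ≤ B.orthogonal L) : ∃ M, L ≤ M ∧ B.orthogonal M = M := by
  obtain ⟨M, ⟨hLM, hM⟩, hmax⟩ :=
    (wellFounded_gt (α := Submodule K V)).has_min {M | L ≤ M ∧ M ≤ B.orthogonal M}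
      ⟨L, le_rfl, hL⟩
  refine ⟨M, hLM, le_antisymm (fun v hv => ?_) hM⟩
  by_contra hvM
  exact hmax (M ⊔ K ∙ v) ⟨hLM.trans le_sup_left, sup_span_singleton_le_orthogonal hB hM hv⟩
    (left_lt_sup.mpr fun h => hvM (h (mem_span_singleton_self v)))

lemma span_range_le_orthogonal {ι : Type*} {v : ι → V} (hv : ∀ i j, B (v i) (v j) = 0) :
    span K (Set.range v) ≤ B.orthogonal (span K (Set.range v)) := by
  refine span_le.mpr (Set.range_subset_iff.mpr fun j x hx => ?_)
  have : span K (Set.range v) ≤ LinearMap.ker (B.flip (v j)) :=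
    span_le.mpr (Set.range_subset_iff.mpr fun i => hv i j)
  exact this hx

lemma exists_linearIndependent_sumElim_of_isotropic [FiniteDimensional K V]
    (hB : B.Nondegenerate) (hB' : B.IsAlt) {ι : Type*} [Fintype ι] {g : ι → V}
    (hg : LinearIndependent K g) (hgg : ∀ i j, B (g i) (g j) = 0) :
    ∃ r, 2 * (Fintype.card ι + r) = finrank K V ∧ ∃ h : Fin r → V,
      LinearIndependent K (Sum.elim g h) ∧ ∀ p q, B (Sum.elim g h p) (Sum.elim g h q) = 0 := by
  obtain ⟨M, hLM, hM⟩ := exists_le_orthogonal_eq hB' (span_range_le_orthogonal hgg)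
  have hgM : ∀ i, g i ∈ M := fun i => hLM (subset_span ⟨i, rfl⟩)
  have hdim : 2 * finrank K M = finrank K V := by
    have := finrank_orthogonal hB M
    rw [hM] at this
    have := M.finrank_le
    omega
  have hcard : Fintype.card ι ≤ finrank K M := by
    rw [← finrank_span_eq_card hg]
    exact finrank_mono hLM
  obtain ⟨h, hLI, hhM⟩ := hg.exists_linearIndependent_sumElim_of_finrank_eq hgM
    (r := finrank K M - Fintype.card ι) (by omega)
  refine ⟨_, by omega, h, hLI, fun p q => ?_⟩
  have hmem : ∀ p, Sum.elim g h p ∈ M := by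
    rintro (i | j)
    exacts [hgM i, hhM j]
  exact hM.ge (hmem q) _ (hmem p)

end LinearMap.BilinForm

noncomputable def symplecticForm (n : ℕ) : LinearMap.BilinForm ℝ (Fin n → ℂ) :=
  LinearMap.mk₂ ℝ (fun u v => (star u ⬝ᵥ v).im)
    (fun u u' v => by simp [add_dotProduct])
    (fun r u v => by simp [smul_dotProduct])
    (fun u v v' => by simp [dotProduct_add])
    (fun r u v => by simp [dotProduct_smul])

lemma symplecticForm_apply {n : ℕ} (u v : Fin n → ℂ) :
    symplecticForm n u v = (star u ⬝ᵥ v).im := rfl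

lemma symplecticForm_isAlt (n : ℕ) : (symplecticForm n).IsAlt := fun u =>
  ((Complex.nonneg_iff.mp (dotProduct_star_self_nonneg u)).2).symm

lemma symplecticForm_nondegenerate (n : ℕ) : (symplecticForm n).Nondegenerate := by
  refine (symplecticForm_isAlt n).isRefl.nondegenerate_iff_separatingLeft.mpr fun u hu => ?_
  have h := hu (Complex.I • u)
  rw [symplecticForm_apply, dotProduct_smul, smul_eq_mul, Complex.I_mul_im] at h
  have him : (star u ⬝ᵥ u).im = 0 := symplecticForm_isAlt n u
  exact dotProduct_star_self_eq_zero.mp (Complex.ext h him)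

lemma finrank_real_fin_fun_complex (n : ℕ) : finrank ℝ (Fin n → ℂ) = 2 * n := by
  rw [Module.finrank_pi_fintype]
  simp [Complex.finrank_real_complex, mul_comm]

lemma sum_smul_eq_zero_and_sum_star_smul_eq_zero_iff {ι V : Type*} [Fintype ι] [AddCommGroup V]
    [Module ℂ V] (a : ι → V) (c : ι → ℂ) :
    (∑ i, c i • a i = 0 ∧ ∑ i, star (c i) • a i = 0) ↔
      (∑ i, (c i).re • a i = 0 ∧ ∑ i, (c i).im • a i = 0) := by
  set R := ∑ i, (c i).re • a i
  set J := ∑ i, (c i).im • a i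
  have hc : ∑ i, c i • a i = R + Complex.I • J := by
    simp only [R, J, Finset.smul_sum, ← Finset.sum_add_distrib]
    refine Finset.sum_congr rfl fun i _ => ?_
    conv_lhs => rw [← Complex.re_add_im (c i)]
    module
  have hc' : ∑ i, star (c i) • a i = R - Complex.I • J := by
    simp only [R, J, Finset.smul_sum, ← Finset.sum_sub_distrib]
    refine Finset.sum_congr rfl fun i _ => ?_
    conv_lhs => rw [← Complex.re_add_im (star (c i))]
    simp only [Complex.star_def, Complex.conj_re, Complex.conj_im]
    module
  rw [hc, hc']
  constructor
  · rintro ⟨h₁, h₂⟩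
    have hR : (2 : ℂ) • R = 0 := by linear_combination (norm := module) h₁ + h₂
    have hJ : (2 * Complex.I) • J = 0 := by linear_combination (norm := module) h₁ - h₂
    exact ⟨(smul_eq_zero.mp hR).resolve_left two_ne_zero,
      (smul_eq_zero.mp hJ).resolve_left (by simp)⟩
  · rintro ⟨hR, hJ⟩
    simp [hR, hJ]

namespace Matrix

lemma map_conj_mul_transpose_eq_mul_conjTranspose_iff {ι : Type*} [Fintype ι] {n : ℕ}
    (W : Matrix ι (Fin n) ℂ) :
    W.map (starRingEnd ℂ) * Wᵀ = W * Wᴴ ↔ ∀ i j, symplecticForm n (W i) (W j) = 0 := by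
  have hL : ∀ i j, (W.map (starRingEnd ℂ) * Wᵀ) i j = star (W i) ⬝ᵥ W j := fun _ _ => rfl
  have hR : ∀ i j, (W * Wᴴ) i j = starRingEnd ℂ (star (W i) ⬝ᵥ W j) := by
    intro i j
    rw [Matrix.mul_apply', starRingEnd_apply, star_dotProduct, star_star, dotProduct_comm]
    rfl
  simp only [symplecticForm_apply, ← Matrix.ext_iff, hL, hR, eq_comm (a := star (W _) ⬝ᵥ W _),
    Complex.conj_eq_iff_im]

lemma rank_fromCols_map_conj_eq_card_iff {ι : Type*} [Fintype ι] {n : ℕ}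
    (A : Matrix ι (Fin n) ℂ) :
    (fromCols (A.map (starRingEnd ℂ)) A).rank = Fintype.card ι ↔ LinearIndependent ℝ A.row := by
  have hrow : ∀ c : ι → ℂ, ∑ i, c i • (fromCols (A.map (starRingEnd ℂ)) A).row i = 0 ↔
      ∑ i, c i • A.row i = 0 ∧ ∑ i, star (c i) • A.row i = 0 := by
    intro c
    have hconj : ∀ k, ∑ i, c i * starRingEnd ℂ (A i k) = 0 ↔ ∑ i, star (c i) * A i k = 0 :=
      fun k => by rw [← star_eq_zero, star_sum]; simp [mul_comm]
    simp only [funext_iff, Sum.forall, Finset.sum_apply, Pi.smul_apply, Matrix.row,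
      fromCols_apply_inl, fromCols_apply_inr, map_apply, Pi.zero_apply, smul_eq_mul, hconj]
    exact and_comm
  rw [rank_eq_finrank_span_row, ← Set.finrank, eq_comm,
    ← linearIndependent_iff_card_eq_finrank_span, Fintype.linearIndependent_iff,
    Fintype.linearIndependent_iff]
  simp only [hrow, sum_smul_eq_zero_and_sum_star_smul_eq_zero_iff]
  constructor
  · intro h r hr i
    exact_mod_cast h (fun i => (r i : ℂ)) (by simpa using hr) i
  · intro h c hc i
    exact Complex.ext (h _ hc.1 i) (h _ hc.2 i)

end Matrix

theorem stmt_5_general {m n : ℕ} (G : Matrix (Fin m) (Fin n) ℂ)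
    (hsymp : G.map (starRingEnd ℂ) * Gᵀ = G * Gᴴ)
    (hrank : (Matrix.fromCols (G.map (starRingEnd ℂ)) G).rank = m) :
    ∃ H : Matrix (Fin (n - m)) (Fin n) ℂ,
      (Matrix.fromRows G H).map (starRingEnd ℂ) * (Matrix.fromRows G H)ᵀ =
        Matrix.fromRows G H * (Matrix.fromRows G H)ᴴ ∧
      (Matrix.fromCols ((Matrix.fromRows G H).map (starRingEnd ℂ))
        (Matrix.fromRows G H)).rank = n := by
  have hG : LinearIndependent ℝ G.row :=
    (rank_fromCols_map_conj_eq_card_iff G).mp (by simpa using hrank)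
  obtain ⟨r, hr, h, hLI, hω⟩ :=
    LinearMap.BilinForm.exists_linearIndependent_sumElim_of_isotropic
      (symplecticForm_nondegenerate n) (symplecticForm_isAlt n) hG
      ((map_conj_mul_transpose_eq_mul_conjTranspose_iff G).mp hsymp)
  rw [finrank_real_fin_fun_complex, Fintype.card_fin] at hr
  obtain rfl : r = n - m := by omega
  refine ⟨Matrix.of h, (map_conj_mul_transpose_eq_mul_conjTranspose_iff _).mpr hω, ?_⟩
  rw [(rank_fromCols_map_conj_eq_card_iff (fromRows G (of h))).mpr hLI, Fintype.card_sum,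
    Fintype.card_fin, Fintype.card_fin]
  omega

/-- Symplectic completion: if G ∈ ℂ^{m×n}, m < n, satisfies G^# Gᵀ = G G* and
[G^# G] has full row rank m, then there exists H ∈ ℂ^{(n−m)×n} such that
W = [G; H] satisfies W^# Wᵀ = W W* and [W^# W] has full row rank n. -/
theorem stmt_5 {m n : ℕ} (hmn : m < n) (G : Matrix (Fin m) (Fin n) ℂ)
    (hsymp : G.map (starRingEnd ℂ) * Gᵀ = G * Gᴴ)
    (hrank : (Matrix.fromCols (G.map (starRingEnd ℂ)) G).rank = m) :
    ∃ H : Matrix (Fin (n - m)) (Fin n) ℂ,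
      (Matrix.fromRows G H).map (starRingEnd ℂ) * (Matrix.fromRows G H)ᵀ =
        Matrix.fromRows G H * (Matrix.fromRows G H)ᴴ ∧
      (Matrix.fromCols ((Matrix.fromRows G H).map (starRingEnd ℂ))
        (Matrix.fromRows G H)).rank = n :=
  stmt_5_general G hsymp hrank
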